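/- arXiv:0904.1256 — 5 statements merged into one kernel-verified Lean document; each statement's English description precedes it below -/
import Mathlib

section
/- Let a, b, k ∈ ℝ and let [·,·] be the unique skew-symmetric bilinear bracket on the real vector space with basis f, e₁, e₂, e₃ determined by [f,e₁] = −e₂, [f,e₂] = e₁, [f,e₃] = 0, [e₁,e₂] = −2b·e₃ − (k+a²+b²)·f, [e₁,e₃] = a·e₁ + b·e₂, [e₂,e₃] = −b·e₁ + a·e₂. Then [·,·] satisfies the Jacobi identity (i.e., defines a Lie algebra structure) if and only if a(k+a²+b²) = 0 and ab = 0. -/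
/-!
Expanding bilinearly, the bracket is given by the explicit coordinate formula `cartanBracket`.
Its Jacobiator is an alternating trilinear map which vanishes whenever one argument is `f`
(`ad f` rotates the `e₁e₂`-plane, which preserves all structure constants), so it is the
`e₁e₂e₃`-minor of `(x, y, z)` times `J(e₁, e₂, e₃) = 2a(k+a²+b²) f + 4ab e₃`.
-/

/-- The basis vector `f`. -/
def bF : Fin 4 → ℝ := ![1, 0, 0, 0]

/-- The basis vector `e₁`. -/
def bE1 : Fin 4 → ℝ := ![0, 1, 0, 0]

/-- The basis vector `e₂`. -/
def bE2 : Fin 4 → ℝ := ![0, 0, 1, 0]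

/-- The basis vector `e₃`. -/
def bE3 : Fin 4 → ℝ := ![0, 0, 0, 1]

theorem LinearMap.apply_self_eq_zero_of_skew {R M : Type*} [CommSemiring R] [AddCommGroup M]
    [IsAddTorsionFree M] [Module R M] (B : M →ₗ[R] M →ₗ[R] M) (hskew : ∀ x y, B x y = -B y x)
    (x : M) : B x x = 0 :=
  self_eq_neg.mp (hskew x x)

lemma eq_sum_coord_smul_basis (x : Fin 4 → ℝ) :
    x = x 0 • bF + x 1 • bE1 + x 2 • bE2 + x 3 • bE3 := by
  funext i
  fin_cases i <;> simp [bF, bE1, bE2, bE3]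

/-- `p i j` is the `(i, j)` Plücker coordinate of `x ∧ y`. -/
def cartanBracket (a b k : ℝ) (x y : Fin 4 → ℝ) : Fin 4 → ℝ :=
  let p i j := x i * y j - x j * y i
  ![-(k + a ^ 2 + b ^ 2) * p 1 2,
    p 0 2 + a * p 1 3 - b * p 2 3,
    -p 0 1 + b * p 1 3 + a * p 2 3,
    -2 * b * p 1 2]

theorem cartanBracket_jacobi (a b k : ℝ) (x y z : Fin 4 → ℝ) :
    let br := cartanBracket a b k
    br (br x y) z + br (br y z) x + br (br z x) y =
      !![x 1, x 2, x 3; y 1, y 2, y 3; z 1, z 2, z 3].det •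
        ((2 * a * (k + a ^ 2 + b ^ 2)) • bF + (4 * a * b) • bE3) := by
  funext i
  fin_cases i <;> simp [cartanBracket, Matrix.det_fin_three, bF, bE3] <;> ring

theorem eq_cartanBracket (a b k : ℝ)
    (B : (Fin 4 → ℝ) →ₗ[ℝ] (Fin 4 → ℝ) →ₗ[ℝ] (Fin 4 → ℝ))
    (hskew : ∀ x y, B x y = -B y x)
    (hfe1 : B bF bE1 = -bE2)
    (hfe2 : B bF bE2 = bE1)
    (hfe3 : B bF bE3 = 0)
    (he12 : B bE1 bE2 = (-2 * b) • bE3 + (-(k + a ^ 2 + b ^ 2)) • bF)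
    (he13 : B bE1 bE3 = a • bE1 + b • bE2)
    (he23 : B bE2 bE3 = (-b) • bE1 + a • bE2) (x y : Fin 4 → ℝ) :
    B x y = cartanBracket a b k x y := by
  rw [eq_sum_coord_smul_basis x, eq_sum_coord_smul_basis y]
  simp only [map_add, map_smul, LinearMap.add_apply, LinearMap.smul_apply,
    B.apply_self_eq_zero_of_skew hskew, hskew bE1 bF, hskew bE2 bF, hskew bE3 bF,
    hskew bE2 bE1, hskew bE3 bE1, hskew bE3 bE2, hfe1, hfe2, hfe3, he12, he13, he23]
  funext i
  fin_cases i <;> simp [cartanBracket, bF, bE1, bE2, bE3] <;> ring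

theorem cartan_triple_bracket_jacobi_iff (a b k : ℝ)
    (B : (Fin 4 → ℝ) →ₗ[ℝ] (Fin 4 → ℝ) →ₗ[ℝ] (Fin 4 → ℝ))
    (hskew : ∀ x y, B x y = -B y x)
    (hfe1 : B bF bE1 = -bE2)
    (hfe2 : B bF bE2 = bE1)
    (hfe3 : B bF bE3 = 0)
    (he12 : B bE1 bE2 = (-2 * b) • bE3 + (-(k + a ^ 2 + b ^ 2)) • bF)
    (he13 : B bE1 bE3 = a • bE1 + b • bE2)
    (he23 : B bE2 bE3 = (-b) • bE1 + a • bE2) :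
    (∀ x y z : Fin 4 → ℝ, B (B x y) z + B (B y z) x + B (B z x) y = 0) ↔
      (a * (k + a ^ 2 + b ^ 2) = 0 ∧ a * b = 0) := by
  have hB := eq_cartanBracket a b k B hskew hfe1 hfe2 hfe3 he12 he13 he23
  simp only [hB, cartanBracket_jacobi]
  constructor
  · intro hJ
    have hv : (2 * a * (k + a ^ 2 + b ^ 2)) • bF + (4 * a * b) • bE3 = 0 := by
      simpa [Matrix.det_fin_three, bE1, bE2, bE3] using hJ bE1 bE2 bE3
    constructor
    · simpa [bF, bE3] using congrFun hv 0
    · simpa [bF, bE3] using congrFun hv 3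
  · rintro ⟨hK, hab⟩ x y z
    simp [mul_assoc, hK, hab]
end

section
/- Let b, k ∈ ℝ with b ≠ 0, and let 𝔨 be the 4-dimensional real Lie algebra with basis f, e₁, e₂, e₃ and brackets [f,e₁] = −e₂, [f,e₂] = e₁, [f,e₃] = 0, [e₁,e₂] = −2b·e₃ − (k+b²)·f, [e₁,e₃] = b·e₂, [e₂,e₃] = −b·e₁. Then the center of 𝔨 is exactly the one-dimensional subspace spanned by e₃ − b·f. -/
theorem LinearMap.isAlt_of_skew {R M N : Type*} [CommSemiring R] [AddCommMonoid M] [Module R M]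
    [AddCommGroup N] [IsAddTorsionFree N] [Module R N] {B : M →ₗ[R] M →ₗ[R] N}
    (hskew : ∀ x y, B x y = -B y x) : B.IsAlt := fun x =>
  two_nsmul_eq_zero.mp <| by rw [two_nsmul, ← eq_neg_iff_add_eq_zero]; exact hskew x x

theorem coord_smul_basis_sum (v : Fin 4 → ℝ) :
    v 0 • bF + v 1 • bE1 + v 2 • bE2 + v 3 • bE3 = v := by
  funext i
  fin_cases i <;> simp [bF, bE1, bE2, bE3]

theorem LinearMap.eq_zero_of_basis {M : Type*} [AddCommMonoid M] [Module ℝ M]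
    (L : (Fin 4 → ℝ) →ₗ[ℝ] M) (hF : L bF = 0) (h1 : L bE1 = 0) (h2 : L bE2 = 0)
    (h3 : L bE3 = 0) : L = 0 := by
  refine LinearMap.ext fun x => ?_
  rw [← coord_smul_basis_sum x]
  simp [hF, h1, h2, h3]

section Bracket

variable {b : ℝ} {B : (Fin 4 → ℝ) →ₗ[ℝ] (Fin 4 → ℝ) →ₗ[ℝ] (Fin 4 → ℝ)}

theorem apply_bF_eq (hskew : ∀ x y, B x y = -B y x) (hfe1 : B bF bE1 = -bE2)
    (hfe2 : B bF bE2 = bE1) (hfe3 : B bF bE3 = 0) (z : Fin 4 → ℝ) :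
    B z bF = z 1 • bE2 - z 2 • bE1 := by
  have hff : B bF bF = 0 := (LinearMap.isAlt_of_skew hskew).self_eq_zero bF
  conv_lhs => rw [← coord_smul_basis_sum z]
  simp only [map_add, map_smul, LinearMap.add_apply, LinearMap.smul_apply]
  rw [hskew bE1, hskew bE2, hskew bE3, hfe1, hfe2, hfe3, hff]
  module

theorem apply_smul_bF_add_smul_bE3_bE1 (hskew : ∀ x y, B x y = -B y x) (hfe1 : B bF bE1 = -bE2)
    (he13 : B bE1 bE3 = b • bE2) (c d : ℝ) :
    B (c • bF + d • bE3) bE1 = -(c + b * d) • bE2 := by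
  simp only [map_add, map_smul, LinearMap.add_apply, LinearMap.smul_apply, hfe1,
    hskew bE3 bE1, he13]
  module

theorem apply_bE3_sub_smul_bF_eq_zero (hskew : ∀ x y, B x y = -B y x) (hfe1 : B bF bE1 = -bE2)
    (hfe2 : B bF bE2 = bE1) (hfe3 : B bF bE3 = 0) (he13 : B bE1 bE3 = b • bE2)
    (he23 : B bE2 bE3 = (-b) • bE1) : B (bE3 - b • bF) = 0 := by
  have hB := LinearMap.isAlt_of_skew hskew
  apply LinearMap.eq_zero_of_basis <;>
    simp only [map_sub, map_smul, LinearMap.sub_apply, LinearMap.smul_apply, hB.self_eq_zero,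
      hskew bE3, hfe1, hfe2, hfe3, he13, he23] <;>
    module

end Bracket

theorem cartan_lie_algebra_center_eq_span_general (b : ℝ)
    (B : (Fin 4 → ℝ) →ₗ[ℝ] (Fin 4 → ℝ) →ₗ[ℝ] (Fin 4 → ℝ))
    (hskew : ∀ x y, B x y = -B y x)
    (hfe1 : B bF bE1 = -bE2)
    (hfe2 : B bF bE2 = bE1)
    (hfe3 : B bF bE3 = 0)
    (he13 : B bE1 bE3 = b • bE2)
    (he23 : B bE2 bE3 = (-b) • bE1) :
    {z : Fin 4 → ℝ | ∀ x : Fin 4 → ℝ, B z x = 0} =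
      (Submodule.span ℝ {bE3 - b • bF} : Set (Fin 4 → ℝ)) := by
  ext z
  simp only [Set.mem_ofPred_eq, SetLike.mem_coe, Submodule.mem_span_singleton]
  constructor
  · intro hcent
    have hF := apply_bF_eq hskew hfe1 hfe2 hfe3 z ▸ hcent bF
    have hz1 : z 1 = 0 := by simpa [bE1, bE2] using congrFun hF 2
    have hz2 : z 2 = 0 := by simpa [bE1, bE2] using congrFun hF 1
    have hz : z = z 0 • bF + z 3 • bE3 := by
      conv_lhs => rw [← coord_smul_basis_sum z]
      simp [hz1, hz2]
    have hE1 := apply_smul_bF_add_smul_bE3_bE1 hskew hfe1 he13 (z 0) (z 3) ▸ hz ▸ hcent bE1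
    have hz0 : z 0 = -(b * z 3) := by
      have h := congrFun hE1 2
      simp only [bE2, Pi.smul_apply, Matrix.cons_val, smul_eq_mul, mul_one, Pi.zero_apply] at h
      linarith
    refine ⟨z 3, ?_⟩
    conv_rhs => rw [hz, hz0]
    module
  · rintro ⟨c, rfl⟩ x
    rw [map_smul, apply_bE3_sub_smul_bF_eq_zero hskew hfe1 hfe2 hfe3 he13 he23]
    simp

theorem cartan_lie_algebra_center_eq_span (b k : ℝ) (hb : b ≠ 0)
    (B : (Fin 4 → ℝ) →ₗ[ℝ] (Fin 4 → ℝ) →ₗ[ℝ] (Fin 4 → ℝ))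
    (hskew : ∀ x y, B x y = -B y x)
    (hfe1 : B bF bE1 = -bE2)
    (hfe2 : B bF bE2 = bE1)
    (hfe3 : B bF bE3 = 0)
    (he12 : B bE1 bE2 = (-2 * b) • bE3 + (-(k + b ^ 2)) • bF)
    (he13 : B bE1 bE3 = b • bE2)
    (he23 : B bE2 bE3 = (-b) • bE1) :
    {z : Fin 4 → ℝ | ∀ x : Fin 4 → ℝ, B z x = 0} =
      (Submodule.span ℝ {bE3 - b • bF} : Set (Fin 4 → ℝ)) :=
  cartan_lie_algebra_center_eq_span_general b B hskew hfe1 hfe2 hfe3 he13 he23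
end

section
/- Let b, k ∈ ℝ with b ≠ 0 and k > −b², and let 𝔨 be the 4-dimensional real Lie algebra with basis f, e₁, e₂, e₃ and brackets [f,e₁] = −e₂, [f,e₂] = e₁, [f,e₃] = 0, [e₁,e₂] = −2b·e₃ − (k+b²)·f, [e₁,e₃] = b·e₂, [e₂,e₃] = −b·e₁. Then the subspace 𝔰 = span(e₁, e₂, 2b·e₃ + (k+b²)·f) is a Lie subalgebra of 𝔨 that is transverse to ℝf (i.e., 𝔨 = 𝔰 ⊕ ℝf), and 𝔰 is isomorphic as a real Lie algebra to 𝔰𝔲(2), the Lie algebra of trace-zero skew-Hermitian 2×2 complex matrices. -/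
/-!
STATEMENT 9: Let `b, k ∈ ℝ` with `b ≠ 0` and `k > −b²`, and let `𝔨` be the
4-dimensional real Lie algebra with basis `f, e₁, e₂, e₃` and brackets
`[f,e₁] = −e₂`, `[f,e₂] = e₁`, `[f,e₃] = 0`, `[e₁,e₂] = −2b·e₃ − (k+b²)·f`,
`[e₁,e₃] = b·e₂`, `[e₂,e₃] = −b·e₁`. Then `𝔰 = span(e₁, e₂, 2b·e₃ + (k+b²)·f)`
is a Lie subalgebra of `𝔨` transverse to `ℝf` (i.e. `𝔨 = 𝔰 ⊕ ℝf`), and `𝔰` is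
isomorphic as a real Lie algebra to `𝔰𝔲(2)`.

We model `𝔨` as `Fin 4 → ℝ` with basis `f = ![1,0,0,0]`, `e₁ = ![0,1,0,0]`,
`e₂ = ![0,0,1,0]`, `e₃ = ![0,0,0,1]`, its bracket being the (unique)
skew-symmetric bilinear map with the prescribed basis values; `𝔰𝔲(2)` is the
real space of trace-zero skew-Hermitian `2×2` complex matrices, with the
commutator bracket.
-/

open Matrix

/-- `𝔰𝔲(2)`: the real subspace of trace-zero skew-Hermitian `2×2` complex
matrices. -/
noncomputable def su2 : Submodule ℝ (Matrix (Fin 2) (Fin 2) ℂ) where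
  carrier := {A | Aᴴ = -A ∧ A.trace = 0}
  add_mem' := by
    rintro A B ⟨hA, hA'⟩ ⟨hB, hB'⟩
    constructor
    · rw [Matrix.conjTranspose_add, hA, hB, neg_add]
    · rw [Matrix.trace_add, hA', hB', add_zero]
  zero_mem' := by simp
  smul_mem' := by
    rintro c A ⟨hA, hA'⟩
    constructor
    · rw [Matrix.conjTranspose_smul, hA, star_trivial, smul_neg]
    · rw [Matrix.trace_smul, hA', smul_zero]

/-!
The functional `ℓ x = 2b·x_f − (k+b²)·x₃` vanishes on every bracket, because the `f`- and
`e₃`-components of `[u, v]` are `−(k+b²)` and `−2b` times `u₁v₂ − u₂v₁`; and `𝔰 = ker ℓ`.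
So `𝔰` is a subalgebra, complementary to `ℝf` since `ℓ f = 2b ≠ 0`. With `w = 2b·e₃ + (k+b²)·f`
and `m = k + 3b² > 0` one finds `[e₁, e₂] = −w`, `[e₂, w] = −m·e₁`, `[w, e₁] = −m·e₂`, so sending
`e₁, e₂, w` to `√m·ε₁, √m·ε₂, −m·ε₃` identifies `𝔰` with `(ℝ³, ⨯₃)`, which is `𝔰𝔲(2)` via
`εⱼ ↦ −(i/2)σⱼ`.
-/

open Complex

/-- `a ↦ a₀X₁ + a₁X₂ + a₂X₃` with `Xⱼ = −(i/2)σⱼ`, so that `[X₁, X₂] = X₃` cyclically. -/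
noncomputable def vecToSu2 : (Fin 3 → ℝ) →ₗ[ℝ] Matrix (Fin 2) (Fin 2) ℂ where
  toFun a := !![-(a 2 * I) / 2, -(a 1 + a 0 * I) / 2; (a 1 - a 0 * I) / 2, a 2 * I / 2]
  map_add' a b := by
    ext i j; fin_cases i <;> fin_cases j <;> simp <;> ring
  map_smul' t a := by
    ext i j; fin_cases i <;> fin_cases j <;> simp <;> ring

lemma vecToSu2_apply (a : Fin 3 → ℝ) :
    vecToSu2 a = !![-(a 2 * I) / 2, -(a 1 + a 0 * I) / 2; (a 1 - a 0 * I) / 2, a 2 * I / 2] :=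
  rfl

lemma vecToSu2_mem (a : Fin 3 → ℝ) : vecToSu2 a ∈ su2 := by
  constructor
  · ext i j
    fin_cases i <;> fin_cases j <;> simp [vecToSu2_apply] <;> ring
  · simp [vecToSu2_apply, Matrix.trace_fin_two]
    ring

lemma vecToSu2_injective : Function.Injective vecToSu2 := by
  rw [← LinearMap.ker_eq_bot, LinearMap.ker_eq_bot']
  intro a ha
  have h00 := congrFun (congrFun ha 0) 0
  have h01 := congrFun (congrFun ha 0) 1
  simp [vecToSu2_apply, Complex.ext_iff] at h00 h01
  ext i; fin_cases i <;> simp [*]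

lemma range_vecToSu2 : LinearMap.range vecToSu2 = su2 := by
  refine le_antisymm (LinearMap.range_le_iff_comap.mpr
    (eq_top_iff.mpr fun a _ => vecToSu2_mem a)) ?_
  rintro A ⟨hskew, htr⟩
  refine ⟨![-2 * (A 0 1).im, -2 * (A 0 1).re, -2 * (A 0 0).im], ?_⟩
  have h00 := congrFun (congrFun hskew 0) 0
  have h10 := congrFun (congrFun hskew 1) 0
  simp [Matrix.conjTranspose_apply, Complex.ext_iff] at h00 h10
  simp [Matrix.trace_fin_two, Complex.ext_iff] at htr
  ext i j; fin_cases i <;> fin_cases j <;> simp [vecToSu2_apply, Complex.ext_iff] <;> grind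

lemma vecToSu2_cross (a b : Fin 3 → ℝ) :
    vecToSu2 (a ⨯₃ b) = vecToSu2 a * vecToSu2 b - vecToSu2 b * vecToSu2 a := by
  rw [vecToSu2_apply, vecToSu2_apply, vecToSu2_apply, cross_apply, Matrix.mul_fin_two,
    Matrix.mul_fin_two]
  ext i j; fin_cases i <;> fin_cases j <;> simp <;> ring_nf <;> simp [Complex.I_sq] <;> ring

lemma LinearMap.isCompl_ker_span_singleton {K V : Type*} [Field K] [AddCommGroup V]
    [Module K V] (f : V →ₗ[K] K) {x : V} (hx : f x ≠ 0) :
    IsCompl (LinearMap.ker f) (K ∙ x) :=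
  Submodule.isCompl_span_singleton_of_isCoatom_of_notMem
    (LinearMap.isCoatom_ker_of_surjective
      (LinearMap.surjective_of_ne_zero (by rintro rfl; exact hx rfl)))
    hx

lemma sum_coords_smul_basis (x : Fin 4 → ℝ) :
    x 0 • bF + x 1 • bE1 + x 2 • bE2 + x 3 • bE3 = x := by
  ext i; fin_cases i <;> simp [bF, bE1, bE2, bE3]

structure IsCartanBracket (b k : ℝ) (B : (Fin 4 → ℝ) →ₗ[ℝ] (Fin 4 → ℝ) →ₗ[ℝ] (Fin 4 → ℝ)) :
    Prop where
  skew : ∀ x y, B x y = -B y x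
  f_e1 : B bF bE1 = -bE2
  f_e2 : B bF bE2 = bE1
  f_e3 : B bF bE3 = 0
  e1_e2 : B bE1 bE2 = (-2 * b) • bE3 + (-(k + b ^ 2)) • bF
  e1_e3 : B bE1 bE3 = b • bE2
  e2_e3 : B bE2 bE3 = (-b) • bE1

noncomputable def cartanForm (b k : ℝ) : Module.Dual ℝ (Fin 4 → ℝ) :=
  (2 * b) • LinearMap.proj 0 - (k + b ^ 2) • LinearMap.proj 3

noncomputable def cartanCoords (b k : ℝ) : (Fin 4 → ℝ) →ₗ[ℝ] (Fin 3 → ℝ) :=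
  LinearMap.pi ![√(k + 3 * b ^ 2) • LinearMap.proj 1, √(k + 3 * b ^ 2) • LinearMap.proj 2,
    (-(k + 3 * b ^ 2) / (2 * b)) • LinearMap.proj 3]

section

variable {b k : ℝ}

lemma cartanForm_apply (x : Fin 4 → ℝ) :
    cartanForm b k x = 2 * b * x 0 - (k + b ^ 2) * x 3 := rfl

lemma cartanCoords_apply (x : Fin 4 → ℝ) :
    cartanCoords b k x = ![√(k + 3 * b ^ 2) * x 1, √(k + 3 * b ^ 2) * x 2,
      -(k + 3 * b ^ 2) / (2 * b) * x 3] := by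
  ext i; fin_cases i <;> rfl

lemma span_eq_ker_cartanForm (hb : b ≠ 0) :
    Submodule.span ℝ {bE1, bE2, (2 * b) • bE3 + (k + b ^ 2) • bF} =
      LinearMap.ker (cartanForm b k) := by
  apply le_antisymm
  · simp only [Submodule.span_le, Set.insert_subset_iff, Set.singleton_subset_iff]
    simp [cartanForm_apply, bE1, bE2, bE3, bF]
    ring
  · intro x hx
    rw [LinearMap.mem_ker, cartanForm_apply] at hx
    have hx' : x = x 1 • bE1 + x 2 • bE2 +
        (x 3 / (2 * b)) • ((2 * b) • bE3 + (k + b ^ 2) • bF) := by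
      ext i; fin_cases i <;> simp [bF, bE1, bE2, bE3] <;> field_simp
      linarith
    rw [hx']
    refine add_mem (add_mem ?_ ?_) ?_ <;>
      exact Submodule.smul_mem _ _ (Submodule.subset_span (by simp))

lemma isCompl_ker_cartanForm (hb : b ≠ 0) :
    IsCompl (LinearMap.ker (cartanForm b k)) (ℝ ∙ bF) :=
  LinearMap.isCompl_ker_span_singleton _ (by simp [cartanForm_apply, bF, hb])

lemma disjoint_ker_cartanForm_ker_cartanCoords (hb : b ≠ 0) (hm : 0 < k + 3 * b ^ 2) :
    Disjoint (LinearMap.ker (cartanForm b k)) (LinearMap.ker (cartanCoords b k)) := by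
  rw [Submodule.disjoint_def]
  intro x hℓ hπ
  rw [LinearMap.mem_ker, cartanForm_apply] at hℓ
  rw [LinearMap.mem_ker, cartanCoords_apply] at hπ
  have hr : √(k + 3 * b ^ 2) ≠ 0 := (Real.sqrt_pos.mpr hm).ne'
  have hγ : -(k + 3 * b ^ 2) / (2 * b) ≠ 0 := div_ne_zero (neg_ne_zero.mpr hm.ne') (by simpa)
  have h1 : x 1 = 0 := (mul_eq_zero.mp (congrFun hπ 0)).resolve_left hr
  have h2 : x 2 = 0 := (mul_eq_zero.mp (congrFun hπ 1)).resolve_left hr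
  have h3 : x 3 = 0 := (mul_eq_zero.mp (congrFun hπ 2)).resolve_left hγ
  have h0 : x 0 = 0 := by simpa [h3, hb] using hℓ
  ext i; fin_cases i <;> assumption

lemma map_cartanCoords_ker_cartanForm (hb : b ≠ 0) (hm : 0 < k + 3 * b ^ 2) :
    (LinearMap.ker (cartanForm b k)).map (cartanCoords b k) = ⊤ := by
  rw [eq_top_iff]
  intro a _
  have hr : √(k + 3 * b ^ 2) ≠ 0 := (Real.sqrt_pos.mpr hm).ne'
  have hγ : -(k + 3 * b ^ 2) / (2 * b) ≠ 0 := div_ne_zero (neg_ne_zero.mpr hm.ne') (by simpa)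
  set t := a 2 / (-(k + 3 * b ^ 2) / (2 * b))
  refine ⟨![(k + b ^ 2) * t / (2 * b), a 0 / √(k + 3 * b ^ 2), a 1 / √(k + 3 * b ^ 2), t],
    ?_, ?_⟩
  · rw [SetLike.mem_coe, LinearMap.mem_ker, cartanForm_apply]
    exact sub_eq_zero.mpr (mul_div_cancel₀ _ (by simpa))
  · rw [cartanCoords_apply]
    ext i; fin_cases i
    exacts [mul_div_cancel₀ _ hr, mul_div_cancel₀ _ hr, mul_div_cancel₀ _ hγ]

namespace IsCartanBracket

variable {B : (Fin 4 → ℝ) →ₗ[ℝ] (Fin 4 → ℝ) →ₗ[ℝ] (Fin 4 → ℝ)}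

lemma apply_self (h : IsCartanBracket b k B) (x : Fin 4 → ℝ) : B x x = 0 :=
  self_eq_neg.mp (h.skew x x)

lemma apply (h : IsCartanBracket b k B) (u v : Fin 4 → ℝ) :
    B u v = ![-(k + b ^ 2) * (u 1 * v 2 - u 2 * v 1),
      (u 0 * v 2 - u 2 * v 0) - b * (u 2 * v 3 - u 3 * v 2),
      (u 1 * v 0 - u 0 * v 1) + b * (u 1 * v 3 - u 3 * v 1),
      -2 * b * (u 1 * v 2 - u 2 * v 1)] := by
  rw [← sum_coords_smul_basis u, ← sum_coords_smul_basis v]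
  simp only [map_add, map_smul, LinearMap.add_apply, LinearMap.smul_apply, h.apply_self,
    h.f_e1, h.f_e2, h.f_e3, h.e1_e2, h.e1_e3, h.e2_e3, h.skew bE1 bF, h.skew bE2 bF,
    h.skew bE3 bF, h.skew bE2 bE1, h.skew bE3 bE1, h.skew bE3 bE2]
  ext i; fin_cases i <;> simp [bF, bE1, bE2, bE3] <;> ring

lemma bracket_mem_ker_cartanForm (h : IsCartanBracket b k B) (u v : Fin 4 → ℝ) :
    B u v ∈ LinearMap.ker (cartanForm b k) := by
  rw [LinearMap.mem_ker, cartanForm_apply, h.apply]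
  simp
  ring

lemma cartanCoords_bracket (h : IsCartanBracket b k B) (hb : b ≠ 0) (hm : 0 ≤ k + 3 * b ^ 2)
    {u v : Fin 4 → ℝ} (hu : u ∈ LinearMap.ker (cartanForm b k))
    (hv : v ∈ LinearMap.ker (cartanForm b k)) :
    cartanCoords b k (B u v) = cartanCoords b k u ⨯₃ cartanCoords b k v := by
  rw [LinearMap.mem_ker, cartanForm_apply] at hu hv
  have hr : √(k + 3 * b ^ 2) ^ 2 = k + 3 * b ^ 2 := Real.sq_sqrt hm
  rw [cartanCoords_apply, cartanCoords_apply, cartanCoords_apply, h.apply, cross_apply]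
  ext i; fin_cases i <;> simp <;> field_simp
  · linear_combination √(k + 3 * b ^ 2) * v 2 * hu - √(k + 3 * b ^ 2) * u 2 * hv
  · linear_combination √(k + 3 * b ^ 2) * u 1 * hv - √(k + 3 * b ^ 2) * v 1 * hu
  · linear_combination (u 2 * v 1 - u 1 * v 2) * hr

end IsCartanBracket

end

theorem cartan_s_subalgebra_transverse_iso_su2 (b k : ℝ) (hb : b ≠ 0) (hk : k > -b ^ 2)
    (B : (Fin 4 → ℝ) →ₗ[ℝ] (Fin 4 → ℝ) →ₗ[ℝ] (Fin 4 → ℝ))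
    (hskew : ∀ x y, B x y = -B y x)
    (hfe1 : B bF bE1 = -bE2)
    (hfe2 : B bF bE2 = bE1)
    (hfe3 : B bF bE3 = 0)
    (he12 : B bE1 bE2 = (-2 * b) • bE3 + (-(k + b ^ 2)) • bF)
    (he13 : B bE1 bE3 = b • bE2)
    (he23 : B bE2 bE3 = (-b) • bE1) :
    ∀ s : Submodule ℝ (Fin 4 → ℝ),
      s = Submodule.span ℝ {bE1, bE2, (2 * b) • bE3 + (k + b ^ 2) • bF} →
      (∀ u ∈ s, ∀ v ∈ s, B u v ∈ s) ∧
      s ⊔ Submodule.span ℝ {bF} = ⊤ ∧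
      s ⊓ Submodule.span ℝ {bF} = ⊥ ∧
      ∃ φ : (Fin 4 → ℝ) →ₗ[ℝ] Matrix (Fin 2) (Fin 2) ℂ,
        Set.InjOn φ s ∧
        Submodule.map φ s = su2 ∧
        ∀ u ∈ s, ∀ v ∈ s, φ (B u v) = φ u * φ v - φ v * φ u := by
  rintro s rfl
  have hB : IsCartanBracket b k B := ⟨hskew, hfe1, hfe2, hfe3, he12, he13, he23⟩
  have hm : 0 < k + 3 * b ^ 2 := by nlinarith [sq_nonneg b]
  rw [span_eq_ker_cartanForm hb]
  refine ⟨fun u _ v _ => hB.bracket_mem_ker_cartanForm u v,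
    (isCompl_ker_cartanForm hb).sup_eq_top, (isCompl_ker_cartanForm hb).inf_eq_bot,
    vecToSu2 ∘ₗ cartanCoords b k, ?_, ?_, ?_⟩
  · exact vecToSu2_injective.comp_injOn
      (LinearMap.injOn_of_disjoint_ker le_rfl (disjoint_ker_cartanForm_ker_cartanCoords hb hm))
  · rw [Submodule.map_comp, map_cartanCoords_ker_cartanForm hb hm, Submodule.map_top,
      range_vecToSu2]
  · intro u hu v hv
    simp only [LinearMap.comp_apply, hB.cartanCoords_bracket hb hm.le hu hv, vecToSu2_cross]
end

section
/- Let b, k ∈ ℝ with b ≠ 0 and k > −b², and let 𝔨 be the 4-dimensional real Lie algebra with basis f, e₁, e₂, e₃ and brackets [f,e₁] = −e₂, [f,e₂] = e₁, [f,e₃] = 0, [e₁,e₂] = −2b·e₃ − (k+b²)·f, [e₁,e₃] = b·e₂, [e₂,e₃] = −b·e₁. Then there is an isomorphism of real Lie algebras φ : 𝔨 → 𝔲(2) onto the Lie algebra of skew-Hermitian 2×2 complex matrices, which carries the subalgebra 𝔰 = span(e₁, e₂, 2b·e₃ + (k+b²)·f) onto 𝔰𝔲(2). -/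
/-!
STATEMENT 10: Let `b, k ∈ ℝ` with `b ≠ 0` and `k > −b²`, and let `𝔨` be the
4-dimensional real Lie algebra with basis `f, e₁, e₂, e₃` and brackets
`[f,e₁] = −e₂`, `[f,e₂] = e₁`, `[f,e₃] = 0`, `[e₁,e₂] = −2b·e₃ − (k+b²)·f`,
`[e₁,e₃] = b·e₂`, `[e₂,e₃] = −b·e₁`. Then there is an isomorphism of real Lie
algebras `φ : 𝔨 → 𝔲(2)` onto the skew-Hermitian `2×2` complex matrices carrying
`𝔰 = span(e₁, e₂, 2b·e₃ + (k+b²)·f)` onto `𝔰𝔲(2)`.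

We model `𝔨` as `Fin 4 → ℝ` with basis `f = ![1,0,0,0]`, `e₁ = ![0,1,0,0]`,
`e₂ = ![0,0,1,0]`, `e₃ = ![0,0,0,1]`, its bracket being the (unique)
skew-symmetric bilinear map with the prescribed basis values; `𝔲(2)` (resp.
`𝔰𝔲(2)`) is the real space of skew-Hermitian (resp. trace-zero skew-Hermitian)
`2×2` complex matrices with the commutator bracket.
-/

open Matrix

/-- `𝔲(2)`: the real subspace of skew-Hermitian `2×2` complex matrices. -/
noncomputable def u2 : Submodule ℝ (Matrix (Fin 2) (Fin 2) ℂ) where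
  carrier := {A | Aᴴ = -A}
  add_mem' := by
    rintro A B hA hB
    show _ᴴ = _
    rw [Matrix.conjTranspose_add, hA, hB, neg_add]
  zero_mem' := by simp
  smul_mem' := by
    rintro c A hA
    show _ᴴ = _
    rw [Matrix.conjTranspose_smul, hA, star_trivial, smul_neg]

/-!
Put `c = k + b²` and `h = 2b e₃ + c f`. Then `[e₁, e₂] = -h`, `[h, e₁] = -(c + 2b²) e₂` and
`[h, e₂] = (c + 2b²) e₁`, so with `p = √(c + 2b²)` the assignment `e₁ ↦ -(p/2) iσ₁`,
`e₂ ↦ -(p/2) iσ₂`, `h ↦ ((c + 2b²)/2) iσ₃` identifies `𝔰` with `𝔰𝔲(2)`. The vector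
`z = b f - e₃` is central and lies outside `𝔰`, and it is sent to a multiple of `iσ₀ = i·1`. As `iσ₀, …, iσ₃` is a real basis of `𝔲(2)` and `iσ₁, iσ₂, iσ₃` one of `𝔰𝔲(2)`, this is the
required isomorphism; that it respects brackets only has to be checked on pairs of basis vectors.
-/

theorem LinearMap.isAlt_of_skew_s10 {K V W : Type*} [Field K] [CharZero K] [AddCommGroup V]
    [Module K V] [AddCommGroup W] [Module K W] {B : V →ₗ[K] V →ₗ[K] W}
    (hB : ∀ x y, B x y = -B y x) : B.IsAlt := by
  intro x
  have h2 : (2 : K) • B x x = 0 := by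
    rw [two_smul]
    nth_rewrite 2 [hB]
    exact add_neg_cancel _
  exact (smul_eq_zero.mp h2).resolve_left two_ne_zero

theorem LinearMap.IsAlt.map_eq_commutator_of_basis {ι R L A : Type*} [LinearOrder ι]
    [CommRing R] [AddCommGroup L] [Module R L] [Ring A] [Algebra R A] (v : Module.Basis ι R L)
    {B : L →ₗ[R] L →ₗ[R] L} (hB : B.IsAlt) (φ : L →ₗ[R] A)
    (h : ∀ i j, i < j → φ (B (v i) (v j)) = φ (v i) * φ (v j) - φ (v j) * φ (v i)) (x y : L) :
    φ (B x y) = φ x * φ y - φ y * φ x := by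
  have key : B.compr₂ φ = (LinearMap.mul R A - (LinearMap.mul R A).flip).compl₁₂ φ φ := by
    refine LinearMap.ext_basis v v fun i j => ?_
    simp only [LinearMap.compr₂_apply, LinearMap.compl₁₂_apply, LinearMap.sub_apply,
      LinearMap.mul_apply', LinearMap.flip_apply]
    rcases lt_trichotomy i j with hij | rfl | hij
    · exact h i j hij
    · rw [hB.self_eq_zero, map_zero, sub_self]
    · rw [← hB.neg, map_neg, h j i hij, neg_sub]
  simpa using LinearMap.congr_fun₂ key x y

open Complex

def iσ₀ : Matrix (Fin 2) (Fin 2) ℂ := !![I, 0; 0, I]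
def iσ₁ : Matrix (Fin 2) (Fin 2) ℂ := !![0, I; I, 0]
def iσ₂ : Matrix (Fin 2) (Fin 2) ℂ := !![0, 1; -1, 0]
def iσ₃ : Matrix (Fin 2) (Fin 2) ℂ := !![I, 0; 0, -I]

theorem su2_le_u2 : su2 ≤ u2 := fun _ hA => hA.1

theorem iσ₀_mem_u2 : iσ₀ ∈ u2 := by
  show _ᴴ = _
  ext i j
  fin_cases i <;> fin_cases j <;> simp [iσ₀]

theorem iσ₁_mem_su2 : iσ₁ ∈ su2 := by
  refine ⟨?_, by simp [iσ₁, Matrix.trace_fin_two]⟩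
  ext i j
  fin_cases i <;> fin_cases j <;> simp [iσ₁]

theorem iσ₂_mem_su2 : iσ₂ ∈ su2 := by
  refine ⟨?_, by simp [iσ₂, Matrix.trace_fin_two]⟩
  ext i j
  fin_cases i <;> fin_cases j <;> simp [iσ₂]

theorem iσ₃_mem_su2 : iσ₃ ∈ su2 := by
  refine ⟨?_, by simp [iσ₃, Matrix.trace_fin_two]⟩
  ext i j
  fin_cases i <;> fin_cases j <;> simp [iσ₃]

theorem eq_pauli_expansion_of_mem_u2 {A : Matrix (Fin 2) (Fin 2) ℂ} (hA : A ∈ u2) :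
    A = (A 0 1).im • iσ₁ + (A 0 1).re • iσ₂ + (((A 0 0).im - (A 1 1).im) / 2) • iσ₃ +
      (((A 0 0).im + (A 1 1).im) / 2) • iσ₀ := by
  have hA : Aᴴ = -A := hA
  have h00 : (A 0 0).re = 0 :=
    CharZero.eq_neg_self_iff.mp (by simpa using congrArg re (congrFun (congrFun hA 0) 0))
  have h11 : (A 1 1).re = 0 :=
    CharZero.eq_neg_self_iff.mp (by simpa using congrArg re (congrFun (congrFun hA 1) 1))
  have h10 : A 1 0 = -(starRingEnd ℂ) (A 0 1) := by
    simpa using congrArg (starRingEnd ℂ) (congrFun (congrFun hA 0) 1)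
  ext i j
  fin_cases i <;> fin_cases j <;> simp [iσ₀, iσ₁, iσ₂, iσ₃, Complex.ext_iff, h00, h11, h10] <;> ring

theorem im_add_im_eq_zero_of_mem_su2 {A : Matrix (Fin 2) (Fin 2) ℂ} (hA : A ∈ su2) :
    (A 0 0).im + (A 1 1).im = 0 := by
  simpa [Matrix.trace_fin_two] using congrArg im hA.2

theorem basisFun_fin_four_eq : ⇑(Pi.basisFun ℝ (Fin 4)) = ![bF, bE1, bE2, bE3] := by
  ext i j
  fin_cases i <;> fin_cases j <;> simp [bF, bE1, bE2, bE3]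

section CartanRep

variable (b c p : ℝ)

/-- Here `c` stands for `k + b²` and `p` for `√(c + 2b²)`. -/
noncomputable def cartanRep : (Fin 4 → ℝ) →ₗ[ℝ] Matrix (Fin 2) (Fin 2) ℂ :=
  Fintype.linearCombination ℝ
    ![(1 / 2 : ℝ) • iσ₃ + b • iσ₀, (-(p / 2)) • iσ₁, (-(p / 2)) • iσ₂,
      (b / 2) • iσ₃ - (c / 2) • iσ₀]

@[simp] theorem cartanRep_bF : cartanRep b c p bF = (1 / 2 : ℝ) • iσ₃ + b • iσ₀ := by
  simp [cartanRep, Fintype.linearCombination_apply, Fin.sum_univ_four, bF]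

@[simp] theorem cartanRep_bE1 : cartanRep b c p bE1 = (-(p / 2)) • iσ₁ := by
  simp [cartanRep, Fintype.linearCombination_apply, Fin.sum_univ_four, bE1]

@[simp] theorem cartanRep_bE2 : cartanRep b c p bE2 = (-(p / 2)) • iσ₂ := by
  simp [cartanRep, Fintype.linearCombination_apply, Fin.sum_univ_four, bE2]

@[simp] theorem cartanRep_bE3 : cartanRep b c p bE3 = (b / 2) • iσ₃ - (c / 2) • iσ₀ := by
  simp [cartanRep, Fintype.linearCombination_apply, Fin.sum_univ_four, bE3]

theorem cartanRep_apply (x : Fin 4 → ℝ) :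
    cartanRep b c p x =
      !![((x 0 * (b + 1 / 2) + x 3 * (b - c) / 2 : ℝ) : ℂ) * I, -((p / 2 : ℝ) * (x 2 + x 1 * I));
        (p / 2 : ℝ) * (x 2 - x 1 * I), ((x 0 * (b - 1 / 2) - x 3 * (b + c) / 2 : ℝ) : ℂ) * I] := by
  ext i j
  fin_cases i <;> fin_cases j <;>
    simp [cartanRep, Fintype.linearCombination_apply, Fin.sum_univ_four, iσ₀, iσ₁, iσ₂, iσ₃] <;>
    ring

theorem cartanRep_mem_u2 (x : Fin 4 → ℝ) : cartanRep b c p x ∈ u2 := by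
  rw [cartanRep, Fintype.linearCombination_apply]
  refine Submodule.sum_mem _ fun i _ => Submodule.smul_mem _ _ ?_
  have h₀ := iσ₀_mem_u2
  have h₁ := su2_le_u2 iσ₁_mem_su2
  have h₂ := su2_le_u2 iσ₂_mem_su2
  have h₃ := su2_le_u2 iσ₃_mem_su2
  fin_cases i <;> simp only [Fin.zero_eta, Fin.mk_one, Fin.reduceFinMk, Matrix.cons_val] <;>
    apply_rules [Submodule.add_mem, Submodule.sub_mem, Submodule.smul_mem]

theorem cartanRep_h :
    cartanRep b c p ((2 * b) • bE3 + c • bF) = ((c + 2 * b ^ 2) / 2) • iσ₃ := by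
  simp only [map_add, map_smul, cartanRep_bE3, cartanRep_bF]
  module

theorem cartanRep_z : cartanRep b c p (b • bF - bE3) = ((c + 2 * b ^ 2) / 2) • iσ₀ := by
  simp only [map_sub, map_smul, cartanRep_bE3, cartanRep_bF]
  module

noncomputable def cartanPreimage (A : Matrix (Fin 2) (Fin 2) ℂ) : Fin 4 → ℝ :=
  (-(2 * (A 0 1).im / p)) • bE1 + (-(2 * (A 0 1).re / p)) • bE2 +
    (((A 0 0).im - (A 1 1).im) / (c + 2 * b ^ 2)) • ((2 * b) • bE3 + c • bF) +
    (((A 0 0).im + (A 1 1).im) / (c + 2 * b ^ 2)) • (b • bF - bE3)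

variable {b c p}

theorem cartanRep_map_bracket (hp : p ^ 2 = c + 2 * b ^ 2)
    {B : (Fin 4 → ℝ) →ₗ[ℝ] (Fin 4 → ℝ) →ₗ[ℝ] (Fin 4 → ℝ)} (hB : B.IsAlt)
    (hfe1 : B bF bE1 = -bE2) (hfe2 : B bF bE2 = bE1) (hfe3 : B bF bE3 = 0)
    (he12 : B bE1 bE2 = (-2 * b) • bE3 + (-c) • bF) (he13 : B bE1 bE3 = b • bE2)
    (he23 : B bE2 bE3 = (-b) • bE1) (x y : Fin 4 → ℝ) :
    cartanRep b c p (B x y) =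
      cartanRep b c p x * cartanRep b c p y - cartanRep b c p y * cartanRep b c p x := by
  refine hB.map_eq_commutator_of_basis (Pi.basisFun ℝ (Fin 4)) _ (fun i j hij => ?_) x y
  have hp' : (p : ℂ) ^ 2 = c + 2 * b ^ 2 := by exact_mod_cast congrArg ofReal hp
  rw [basisFun_fin_four_eq]
  fin_cases i <;> fin_cases j <;> try exact absurd hij (by decide)
  all_goals
    simp only [Fin.zero_eta, Fin.mk_one, Fin.reduceFinMk, Matrix.cons_val, hfe1, hfe2, hfe3, he12,
      he13, he23, map_neg, map_add, map_smul, map_zero, cartanRep_bF, cartanRep_bE1,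
      cartanRep_bE2, cartanRep_bE3]
    ext i j
    fin_cases i <;> fin_cases j <;> simp [iσ₀, iσ₁, iσ₂, iσ₃] <;> ring_nf <;>
      simp only [I_sq, hp'] <;> ring

theorem cartanRep_injective (hp : p ^ 2 = c + 2 * b ^ 2) (hq : c + 2 * b ^ 2 ≠ 0) :
    Function.Injective (cartanRep b c p) := by
  have hp0 : p ≠ 0 := by rintro rfl; exact hq (by simpa using hp.symm)
  rw [injective_iff_map_eq_zero]
  intro x hx
  rw [cartanRep_apply] at hx
  have h00 : x 0 * (b + 1 / 2) + x 3 * (b - c) / 2 = 0 := by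
    simpa using congrArg (fun A => (A 0 0).im) hx
  have h11 : x 0 * (b - 1 / 2) - x 3 * (b + c) / 2 = 0 := by
    simpa using congrArg (fun A => (A 1 1).im) hx
  have hx1 : x 1 = 0 := by simpa [hp0] using congrArg (fun A => (A 0 1).im) hx
  have hx2 : x 2 = 0 := by simpa [hp0] using congrArg (fun A => (A 0 1).re) hx
  have hx0 : (c + 2 * b ^ 2) * x 0 = 0 := by linear_combination (b + c) * h00 + (b - c) * h11
  have hx3 : (c + 2 * b ^ 2) * x 3 = 0 := by
    linear_combination (2 * b - 1) * h00 - (2 * b + 1) * h11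
  ext i
  fin_cases i
  exacts [(mul_eq_zero.mp hx0).resolve_left hq, hx1, hx2, (mul_eq_zero.mp hx3).resolve_left hq]

theorem cartanRep_cartanPreimage {A : Matrix (Fin 2) (Fin 2) ℂ} (hA : A ∈ u2)
    (hp : p ^ 2 = c + 2 * b ^ 2) (hq : c + 2 * b ^ 2 ≠ 0) :
    cartanRep b c p (cartanPreimage b c p A) = A := by
  have hp0 : p ≠ 0 := by rintro rfl; exact hq (by simpa using hp.symm)
  conv_rhs => rw [eq_pauli_expansion_of_mem_u2 hA]
  rw [cartanPreimage, map_add, map_add, map_add, map_smul, map_smul, map_smul, map_smul,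
    cartanRep_bE1, cartanRep_bE2, cartanRep_h, cartanRep_z, smul_smul, smul_smul, smul_smul,
    smul_smul]
  match_scalars <;> field_simp

theorem cartanPreimage_mem_span {A : Matrix (Fin 2) (Fin 2) ℂ} (hA : A ∈ su2) :
    cartanPreimage b c p A ∈ Submodule.span ℝ {bE1, bE2, (2 * b) • bE3 + c • bF} := by
  rw [cartanPreimage, im_add_im_eq_zero_of_mem_su2 hA, zero_div, zero_smul, add_zero]
  refine add_mem (add_mem (Submodule.smul_mem _ _ (Submodule.subset_span ?_))
    (Submodule.smul_mem _ _ (Submodule.subset_span ?_)))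
    (Submodule.smul_mem _ _ (Submodule.subset_span ?_)) <;> simp

theorem cartanRep_image_span (hp : p ^ 2 = c + 2 * b ^ 2) (hq : c + 2 * b ^ 2 ≠ 0) :
    cartanRep b c p '' (Submodule.span ℝ {bE1, bE2, (2 * b) • bE3 + c • bF} : Set _) = su2 := by
  refine Set.Subset.antisymm ?_ fun A hA =>
    ⟨_, cartanPreimage_mem_span hA, cartanRep_cartanPreimage (su2_le_u2 hA) hp hq⟩
  have hgen : Submodule.span ℝ {bE1, bE2, (2 * b) • bE3 + c • bF} ≤
      su2.comap (cartanRep b c p) := by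
    rw [Submodule.span_le]
    rintro x (rfl | rfl | rfl)
    · simpa using su2.smul_mem (-(p / 2)) iσ₁_mem_su2
    · simpa using su2.smul_mem (-(p / 2)) iσ₂_mem_su2
    · simpa [cartanRep_h] using su2.smul_mem ((c + 2 * b ^ 2) / 2) iσ₃_mem_su2
  rintro _ ⟨x, hx, rfl⟩
  exact hgen hx

end CartanRep

theorem cartan_algebra_iso_u2_carrying_s_to_su2_general (b k : ℝ) (hk : k > -b ^ 2)
    (B : (Fin 4 → ℝ) →ₗ[ℝ] (Fin 4 → ℝ) →ₗ[ℝ] (Fin 4 → ℝ))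
    (hskew : ∀ x y, B x y = -B y x)
    (hfe1 : B bF bE1 = -bE2)
    (hfe2 : B bF bE2 = bE1)
    (hfe3 : B bF bE3 = 0)
    (he12 : B bE1 bE2 = (-2 * b) • bE3 + (-(k + b ^ 2)) • bF)
    (he13 : B bE1 bE3 = b • bE2)
    (he23 : B bE2 bE3 = (-b) • bE1)
    (s : Submodule ℝ (Fin 4 → ℝ))
    (hs : s = Submodule.span ℝ {bE1, bE2, (2 * b) • bE3 + (k + b ^ 2) • bF}) :
    ∃ φ : (Fin 4 → ℝ) ≃ₗ[ℝ] u2,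
      (∀ u v : Fin 4 → ℝ,
        (φ (B u v) : Matrix (Fin 2) (Fin 2) ℂ) =
          (φ u : Matrix (Fin 2) (Fin 2) ℂ) * (φ v : Matrix (Fin 2) (Fin 2) ℂ) -
            (φ v : Matrix (Fin 2) (Fin 2) ℂ) * (φ u : Matrix (Fin 2) (Fin 2) ℂ)) ∧
      (fun u => (φ u : Matrix (Fin 2) (Fin 2) ℂ)) '' (s : Set (Fin 4 → ℝ)) =
        (su2 : Set (Matrix (Fin 2) (Fin 2) ℂ)) := by
  have hq : 0 < k + b ^ 2 + 2 * b ^ 2 := by linarith [sq_nonneg b]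
  obtain ⟨p, hp⟩ : ∃ p : ℝ, p ^ 2 = k + b ^ 2 + 2 * b ^ 2 := ⟨√_, Real.sq_sqrt hq.le⟩
  let ρ := (cartanRep b (k + b ^ 2) p).codRestrict u2 (cartanRep_mem_u2 _ _ _)
  have hρ : Function.Bijective ρ :=
    ⟨fun x y hxy => cartanRep_injective hp hq.ne' (congrArg Subtype.val hxy),
      fun A => ⟨_, Subtype.ext (cartanRep_cartanPreimage A.2 hp hq.ne')⟩⟩
  refine ⟨LinearEquiv.ofBijective ρ hρ,
    cartanRep_map_bracket hp (LinearMap.isAlt_of_skew_s10 hskew) hfe1 hfe2 hfe3 he12 he13 he23, ?_⟩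
  subst hs
  exact cartanRep_image_span hp hq.ne'

theorem cartan_algebra_iso_u2_carrying_s_to_su2 (b k : ℝ) (hb : b ≠ 0) (hk : k > -b ^ 2)
    (B : (Fin 4 → ℝ) →ₗ[ℝ] (Fin 4 → ℝ) →ₗ[ℝ] (Fin 4 → ℝ))
    (hskew : ∀ x y, B x y = -B y x)
    (hfe1 : B bF bE1 = -bE2)
    (hfe2 : B bF bE2 = bE1)
    (hfe3 : B bF bE3 = 0)
    (he12 : B bE1 bE2 = (-2 * b) • bE3 + (-(k + b ^ 2)) • bF)
    (he13 : B bE1 bE3 = b • bE2)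
    (he23 : B bE2 bE3 = (-b) • bE1)
    (s : Submodule ℝ (Fin 4 → ℝ))
    (hs : s = Submodule.span ℝ {bE1, bE2, (2 * b) • bE3 + (k + b ^ 2) • bF}) :
    ∃ φ : (Fin 4 → ℝ) ≃ₗ[ℝ] u2,
      (∀ u v : Fin 4 → ℝ,
        (φ (B u v) : Matrix (Fin 2) (Fin 2) ℂ) =
          (φ u : Matrix (Fin 2) (Fin 2) ℂ) * (φ v : Matrix (Fin 2) (Fin 2) ℂ) -
            (φ v : Matrix (Fin 2) (Fin 2) ℂ) * (φ u : Matrix (Fin 2) (Fin 2) ℂ)) ∧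
      (fun u => (φ u : Matrix (Fin 2) (Fin 2) ℂ)) '' (s : Set (Fin 4 → ℝ)) =
        (su2 : Set (Matrix (Fin 2) (Fin 2) ℂ)) :=
  cartan_algebra_iso_u2_carrying_s_to_su2_general b k hk B hskew hfe1 hfe2 hfe3 he12 he13 he23 s hs
end

section
/- For every inner product B on the 3-dimensional real vector space Im ℍ of purely imaginary quaternions, there exists a unit quaternion q such that the three vectors q·i·q⁻¹, q·j·q⁻¹, q·k·q⁻¹ are pairwise B-orthogonal. (Consequently every left-invariant Riemannian metric on the group S³ of unit quaternions is, in a suitably rotated Cartan coframe σ₁, σ₂, σ₃, of Milnor's diagonal form g_λ = 4((λ₂λ₃)⁻¹σ₁² + (λ₁λ₃)⁻¹σ₂² + (λ₁λ₂)⁻¹σ₃²).) -/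
/-!
Restricted to the pure quaternions, `B` is a symmetric form on a Euclidean 3-space, so by the
spectral theorem it has an orthonormal eigenbasis; let `u, v` be two of its vectors. Orthonormal
pure quaternions satisfy the relations `u² = v² = -1`, `uv = -vu` of `i, j`, and any two such
pairs are conjugate in a division ring: if `a² = b² = -1` then `(1 - ba) a = b (1 - ba)`, and
`1 - ba` vanishes only when `b = -a`, where any element anticommuting with `a` does the job
instead. Moving `i` to `u` and then the image of `j` to `v` by an intertwiner commuting with `u`
gives `q`. Finally `q k q⁻¹ = uv` is Euclidean-orthogonal to `u` and `v`, and an eigenvector of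
`B` is `B`-orthogonal to everything Euclidean-orthogonal to it.
-/

open Quaternion

def quatI : ℍ[ℝ] := ⟨0, 1, 0, 0⟩

def quatJ : ℍ[ℝ] := ⟨0, 0, 1, 0⟩

def quatK : ℍ[ℝ] := ⟨0, 0, 0, 1⟩

open RealInnerProductSpace

section Spectral

variable {E : Type*} [NormedAddCommGroup E] [InnerProductSpace ℝ E] [FiniteDimensional ℝ E]

theorem LinearMap.BilinForm.IsSymm.exists_isSymmetric_inner_eq {B : LinearMap.BilinForm ℝ E}
    (hB : B.IsSymm) : ∃ T : E →ₗ[ℝ] E, T.IsSymmetric ∧ ∀ x y, ⟪T x, y⟫ = B x y := by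
  let T : E →ₗ[ℝ] E := (InnerProductSpace.toDual ℝ E).symm.toLinearMap ∘ₗ
    LinearMap.toContinuousLinearMap.toLinearMap ∘ₗ B
  have hT : ∀ x y, ⟪T x, y⟫ = B x y := fun x y => InnerProductSpace.toDual_symm_apply
  refine ⟨T, fun x y => ?_, hT⟩
  rw [hT, real_inner_comm, hT, hB.eq]

theorem LinearMap.BilinForm.IsSymm.exists_orthonormalBasis_apply_eq_mul_inner
    {B : LinearMap.BilinForm ℝ E} (hB : B.IsSymm) {n : ℕ} (hn : Module.finrank ℝ E = n) :
    ∃ (e : OrthonormalBasis (Fin n) ℝ E) (μ : Fin n → ℝ), ∀ a y, B (e a) y = μ a * ⟪e a, y⟫ := by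
  obtain ⟨T, hT, hTB⟩ := hB.exists_isSymmetric_inner_eq
  refine ⟨hT.eigenvectorBasis hn, hT.eigenvalues hn, fun a y => ?_⟩
  rw [← hTB, hT.apply_eigenvectorBasis, real_inner_smul_left]
  rfl

end Spectral

structure IsQuaternionPair {R : Type*} [Ring R] (a b : R) : Prop where
  mul_self_left : a * a = -1
  mul_self_right : b * b = -1
  anticomm : a * b = -(b * a)

section Ring

variable {R : Type*} [Ring R] {a b c z : R}

theorem commute_mul_of_anticomm (hab : a * b = -(b * a)) (hac : a * c = -(c * a)) :
    Commute a (b * c) := by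
  calc a * (b * c) = -(b * (a * c)) := by rw [← mul_assoc, hab, neg_mul, mul_assoc]
    _ = b * c * a := by rw [hac, mul_neg, neg_neg, mul_assoc]

theorem one_sub_mul_mul_eq_mul_one_sub_mul (ha : a * a = -1) (hb : b * b = -1) :
    (1 - b * a) * a = b * (1 - b * a) := by
  calc (1 - b * a) * a = a - b * (a * a) := by rw [sub_mul, one_mul, mul_assoc]
    _ = b - b * b * a := by rw [ha, hb]; noncomm_ring
    _ = b * (1 - b * a) := by rw [mul_sub, mul_one, mul_assoc]

theorem eq_neg_of_mul_eq_one_of_mul_self (ha : a * a = -1) (hba : b * a = 1) : b = -a := by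
  calc b = -(b * (a * a)) := by rw [ha, mul_neg_one, neg_neg]
    _ = -a := by rw [← mul_assoc, hba, one_mul]

theorem exists_ne_zero_mul_eq_mul_commute (ha : a * a = -1) (hb : b * b = -1) (hc : c ≠ 0)
    (hca : c * a = -(a * c)) (hzc : Commute z c) (hzba : Commute z (b * a)) :
    ∃ q, q ≠ 0 ∧ q * a = b * q ∧ Commute z q := by
  by_cases hab : b = -a
  · exact ⟨c, hc, by rw [hca, hab, neg_mul], hzc⟩
  · exact ⟨1 - b * a, fun h => hab (eq_neg_of_mul_eq_one_of_mul_self ha (sub_eq_zero.1 h).symm),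
      one_sub_mul_mul_eq_mul_one_sub_mul ha hb, (Commute.one_right z).sub_right hzba⟩

end Ring

namespace IsQuaternionPair

section Nontrivial

variable {R : Type*} [Ring R] [Nontrivial R] {a b : R}

theorem ne_zero_left (h : IsQuaternionPair a b) : a ≠ 0 := by
  rintro rfl
  simpa using h.mul_self_left

theorem ne_zero_right (h : IsQuaternionPair a b) : b ≠ 0 := by
  rintro rfl
  simpa using h.mul_self_right

end Nontrivial

variable {D : Type*} [DivisionRing D] {a₁ a₂ b₁ b₂ : D}

theorem conj (h : IsQuaternionPair a₁ a₂) {q : D} (hq : q ≠ 0) :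
    IsQuaternionPair (q * a₁ * q⁻¹) (q * a₂ * q⁻¹) := by
  have hmul (x y : D) : q * x * q⁻¹ * (q * y * q⁻¹) = q * (x * y) * q⁻¹ := by
    simp only [mul_assoc, inv_mul_cancel_left₀ hq]
  refine ⟨?_, ?_, ?_⟩
  · rw [hmul, h.mul_self_left, mul_neg_one, neg_mul, mul_inv_cancel₀ hq]
  · rw [hmul, h.mul_self_right, mul_neg_one, neg_mul, mul_inv_cancel₀ hq]
  · rw [hmul, hmul, h.anticomm, mul_neg, neg_mul]

theorem exists_mul_eq_mul (ha : IsQuaternionPair a₁ a₂) (hb : IsQuaternionPair b₁ b₂) :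
    ∃ q : D, q ≠ 0 ∧ q * a₁ = b₁ * q ∧ q * a₂ = b₂ * q := by
  obtain ⟨q₁, hq₁, h₁, -⟩ := exists_ne_zero_mul_eq_mul_commute ha.mul_self_left
    hb.mul_self_left ha.ne_zero_right (by rw [ha.anticomm, neg_neg])
    (Commute.one_left a₂) (Commute.one_left (b₁ * a₁))
  set a₂' := q₁ * a₂ * q₁⁻¹ with ha₂'
  have ha' : IsQuaternionPair b₁ a₂' := by
    simpa only [h₁, mul_inv_cancel_right₀ hq₁] using ha.conj hq₁
  obtain ⟨q₂, hq₂, h₂, hc⟩ := exists_ne_zero_mul_eq_mul_commute ha'.mul_self_right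
    hb.mul_self_right hb.ne_zero_left ha'.anticomm (Commute.refl b₁)
    (commute_mul_of_anticomm hb.anticomm ha'.anticomm)
  refine ⟨q₂ * q₁, mul_ne_zero hq₂ hq₁, ?_, ?_⟩
  · rw [mul_assoc, h₁, ← mul_assoc, ← hc.eq, mul_assoc]
  · rw [mul_assoc, show q₁ * a₂ = a₂' * q₁ by rw [ha₂', inv_mul_cancel_right₀ hq₁],
      ← mul_assoc, h₂, mul_assoc]

end IsQuaternionPair

namespace Quaternion

theorem mem_orthogonal_one_iff {x : ℍ[ℝ]} : x ∈ (ℝ ∙ (1 : ℍ[ℝ]))ᗮ ↔ x.re = 0 := by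
  rw [Submodule.mem_orthogonal_singleton_iff_inner_right, inner_def]
  simp

theorem finrank_orthogonal_one : Module.finrank ℝ (ℝ ∙ (1 : ℍ[ℝ]))ᗮ = 3 :=
  Submodule.finrank_add_finrank_orthogonal' <| by
    rw [finrank_span_singleton one_ne_zero, finrank_eq_four]

theorem inner_self_mul (u v : ℍ[ℝ]) : ⟪u, u * v⟫ = normSq u * v.re := by
  simp only [inner_def, normSq_def', star_mul, re_mul, imI_mul, imJ_mul, imK_mul, re_star,
    imI_star, imJ_star, imK_star]
  ring

theorem inner_mul_self (u v : ℍ[ℝ]) : ⟪v, u * v⟫ = normSq v * u.re := by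
  simp only [inner_def, normSq_def', star_mul, re_mul, imI_mul, imJ_mul, imK_mul, re_star,
    imI_star, imJ_star, imK_star]
  ring

theorem re_mul_eq_neg_inner {u : ℍ[ℝ]} (hu : u.re = 0) (v : ℍ[ℝ]) : (u * v).re = -⟪u, v⟫ := by
  simp only [inner_def, re_mul, re_star, imI_star, imJ_star, imK_star, hu]
  ring

theorem mul_self_eq_neg_one {u : ℍ[ℝ]} (hu : u.re = 0) (hu₁ : ‖u‖ = 1) : u * u = -1 := by
  rw [← sq, sq_eq_neg_normSq.2 hu, normSq_eq_norm_mul_self, hu₁, mul_one, coe_one]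

theorem isQuaternionPair_of_orthonormal {u v : ℍ[ℝ]} (hu : u.re = 0) (hv : v.re = 0)
    (hu₁ : ‖u‖ = 1) (hv₁ : ‖v‖ = 1) (huv : ⟪u, v⟫ = 0) : IsQuaternionPair u v := by
  refine ⟨mul_self_eq_neg_one hu hu₁, mul_self_eq_neg_one hv hv₁, ?_⟩
  rw [inner_def] at huv
  ext <;>
    simp only [re_mul, imI_mul, imJ_mul, imK_mul, re_neg, imI_neg, imJ_neg, imK_neg, re_star,
      imI_star, imJ_star, imK_star, hu, hv] at huv ⊢ <;>
    linarith

end Quaternion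

theorem quatI_mul_quatJ : quatI * quatJ = quatK := by
  ext <;> simp only [re_mul, imI_mul, imJ_mul, imK_mul] <;> simp [quatI, quatJ, quatK]

theorem isQuaternionPair_quatI_quatJ : IsQuaternionPair quatI quatJ := by
  refine ⟨?_, ?_, ?_⟩ <;> ext <;>
    simp only [re_mul, imI_mul, imJ_mul, imK_mul, re_neg, imI_neg, imJ_neg, imK_neg] <;>
    simp [quatI, quatJ]

theorem exists_norm_eq_one_conj_eq {u v : ℍ[ℝ]} (h : IsQuaternionPair u v) :
    ∃ q : ℍ[ℝ], ‖q‖ = 1 ∧ q * quatI * q⁻¹ = u ∧ q * quatJ * q⁻¹ = v ∧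
      q * quatK * q⁻¹ = u * v := by
  obtain ⟨q, hq, hi, hj⟩ := isQuaternionPair_quatI_quatJ.exists_mul_eq_mul h
  have hn : ‖q‖ ≠ 0 := norm_ne_zero_iff.2 hq
  set p := ‖q‖⁻¹ • q
  have hp : p ≠ 0 := smul_ne_zero (inv_ne_zero hn) hq
  have hconj {a b : ℍ[ℝ]} (hab : q * a = b * q) : p * a * p⁻¹ = b :=
    (mul_inv_eq_iff_eq_mul₀ hp).2 (by rw [smul_mul_assoc, hab, mul_smul_comm])
  refine ⟨p, by rw [norm_smul, norm_inv, norm_norm, inv_mul_cancel₀ hn], hconj hi, hconj hj,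
    hconj ?_⟩
  rw [← quatI_mul_quatJ, ← mul_assoc, hi, mul_assoc, hj, mul_assoc]

theorem exists_unit_quaternion_diagonalizing_general
    (B : ℍ[ℝ] →ₗ[ℝ] ℍ[ℝ] →ₗ[ℝ] ℝ)
    (hsymm : ∀ x y : ℍ[ℝ], x.re = 0 → y.re = 0 → B x y = B y x) :
    ∃ q : ℍ[ℝ], ‖q‖ = 1 ∧
      B (q * quatI * q⁻¹) (q * quatJ * q⁻¹) = 0 ∧
      B (q * quatI * q⁻¹) (q * quatK * q⁻¹) = 0 ∧
      B (q * quatJ * q⁻¹) (q * quatK * q⁻¹) = 0 := by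
  set K := (ℝ ∙ (1 : ℍ[ℝ]))ᗮ
  have hBK : LinearMap.BilinForm.IsSymm (B.compl₁₂ K.subtype K.subtype) :=
    ⟨fun x y => hsymm x y (mem_orthogonal_one_iff.1 x.2) (mem_orthogonal_one_iff.1 y.2)⟩
  obtain ⟨e, μ, hBe⟩ := hBK.exists_orthonormalBasis_apply_eq_mul_inner finrank_orthogonal_one
  have hB (a : Fin 3) (y : ℍ[ℝ]) (hy : y.re = 0) : B (e a) y = μ a * ⟪(e a : ℍ[ℝ]), y⟫ :=
    hBe a ⟨y, mem_orthogonal_one_iff.2 hy⟩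
  have hre (a : Fin 3) : (e a : ℍ[ℝ]).re = 0 := mem_orthogonal_one_iff.1 (e a).2
  have h01 : ⟪(e 0 : ℍ[ℝ]), e 1⟫ = 0 := e.orthonormal.2 (by decide)
  obtain ⟨q, hq, hqi, hqj, hqk⟩ := exists_norm_eq_one_conj_eq <|
    isQuaternionPair_of_orthonormal (hre 0) (hre 1) (e.orthonormal.1 0) (e.orthonormal.1 1) h01
  have hre01 : ((e 0 : ℍ[ℝ]) * e 1).re = 0 := by rw [re_mul_eq_neg_inner (hre 0), h01, neg_zero]
  refine ⟨q, hq, ?_, ?_, ?_⟩ <;> simp only [hqi, hqj, hqk]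
  · rw [hB 0 _ (hre 1), h01, mul_zero]
  · rw [hB 0 _ hre01, inner_self_mul, hre 1, mul_zero, mul_zero]
  · rw [hB 1 _ hre01, inner_mul_self, hre 0, mul_zero, mul_zero]

theorem exists_unit_quaternion_diagonalizing
    (B : ℍ[ℝ] →ₗ[ℝ] ℍ[ℝ] →ₗ[ℝ] ℝ)
    (hsymm : ∀ x y : ℍ[ℝ], x.re = 0 → y.re = 0 → B x y = B y x)
    (hpos : ∀ x : ℍ[ℝ], x.re = 0 → x ≠ 0 → 0 < B x x) :
    ∃ q : ℍ[ℝ], ‖q‖ = 1 ∧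
      B (q * quatI * q⁻¹) (q * quatJ * q⁻¹) = 0 ∧
      B (q * quatI * q⁻¹) (q * quatK * q⁻¹) = 0 ∧
      B (q * quatJ * q⁻¹) (q * quatK * q⁻¹) = 0 :=
  exists_unit_quaternion_diagonalizing_general B hsymm
end
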